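/- arXiv:1009.5146 — 5 statements merged into one kernel-verified Lean document; each statement's English description precedes it below -/
import Mathlib

section
/- Let h ∈ ℂ^N be a row vector, w ∈ ℂ^N a column vector, ε > 0, and Q an N×N Hermitian positive definite matrix. Then the minimum of |h·w + x·w|² over all row vectors x with √(x Q xᴴ) ≤ ε equals (max(0, |h·w| − ε·√(wᴴ Q⁻¹ w)))². -/
/-!
For the inner product `⟪x, y⟫ = xᴴ Q y`, Cauchy–Schwarz (with equality along `u`) shows that
`y ↦ ⟪y, u⟫` maps the ball of radius `ε` onto the disc of radius `ε ‖u‖`. Taking `u = Q⁻¹ w` turns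
`x · w` into `⟪xᴴ, u⟫` and `wᴴ Q⁻¹ w` into `‖u‖²`, so with `c = h · w` the problem is to minimise
`|c + z|` over a disc of radius `R = ε ‖u‖`, whose minimum `max 0 (|c| - R)` is attained by
shrinking `c` towards `0` by `min |c| R`.
-/

open scoped BigOperators ComplexOrder

open Metric Matrix

lemma isLeast_norm_add_closedBall {E : Type*} [SeminormedAddCommGroup E] [NormedSpace ℝ E]
    (c : E) {R : ℝ} (hR : 0 ≤ R) :
    IsLeast ((fun z => ‖c + z‖) '' closedBall 0 R) (max 0 (‖c‖ - R)) := by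
  set s : ℝ := min 1 (R / ‖c‖)
  have hs : s * ‖c‖ = min ‖c‖ R := by
    rcases (norm_nonneg c).eq_or_lt with hc | hc
    · simp [s, ← hc, hR]
    · rw [min_mul_of_nonneg _ _ hc.le, one_mul, div_mul_cancel₀ _ hc.ne']
  have hs1 : s ≤ 1 := min_le_left _ _
  refine ⟨⟨-(s • c), ?_, ?_⟩, ?_⟩
  · rw [mem_closedBall_zero_iff, norm_neg, norm_smul, Real.norm_eq_abs, abs_of_nonneg, hs]
    · exact min_le_right _ _
    · exact le_min zero_le_one (by positivity)
  · show ‖c + -(s • c)‖ = _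
    rw [show c + -(s • c) = (1 - s) • c by module, norm_smul, Real.norm_eq_abs,
      abs_of_nonneg (sub_nonneg.2 hs1), sub_mul, one_mul, hs, ← max_sub_sub_left, sub_self]
  · rintro _ ⟨z, hz, rfl⟩
    rw [mem_closedBall_zero_iff] at hz
    exact max_le (norm_nonneg _) (by linarith [norm_sub_le_norm_add c z])

lemma image_inner_left_closedBall {𝕜 E : Type*} [RCLike 𝕜] [SeminormedAddCommGroup E]
    [InnerProductSpace 𝕜 E] (u : E) {ε : ℝ} (hε : 0 ≤ ε) :
    (fun y => inner 𝕜 y u) '' closedBall (0 : E) ε = closedBall 0 (ε * ‖u‖) := by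
  ext z
  simp only [Set.mem_image, mem_closedBall_zero_iff]
  constructor
  · rintro ⟨y, hy, rfl⟩
    exact (norm_inner_le_norm y u).trans (mul_le_mul_of_nonneg_right hy (norm_nonneg u))
  · intro hz
    rcases (norm_nonneg u).eq_or_lt with hu | hu
    · refine ⟨0, by simpa using hε, ?_⟩
      rw [← hu, mul_zero, norm_le_zero_iff] at hz
      simp [hz]
    · refine ⟨(starRingEnd 𝕜 z / (‖u‖ : 𝕜) ^ 2) • u, ?_, ?_⟩
      · rw [norm_smul, norm_div, RCLike.norm_conj, norm_pow, RCLike.norm_ofReal, abs_norm, sq,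
          div_mul_eq_mul_div, mul_div_mul_right _ _ hu.ne', div_le_iff₀ hu]
        exact hz
      · rw [inner_smul_left, inner_self_eq_norm_sq_to_K, map_div₀, RCLike.conj_conj, map_pow,
          RCLike.conj_ofReal, div_mul_cancel₀]
        exact pow_ne_zero _ (RCLike.ofReal_ne_zero.2 hu.ne')

lemma isLeast_sq_norm_add_inner {𝕜 E : Type*} [RCLike 𝕜] [SeminormedAddCommGroup E]
    [InnerProductSpace 𝕜 E] (c : 𝕜) (u : E) {ε : ℝ} (hε : 0 ≤ ε) :
    IsLeast {v : ℝ | ∃ y : E, ‖y‖ ≤ ε ∧ v = ‖c + inner 𝕜 y u‖ ^ 2}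
      (max 0 (‖c‖ - ε * ‖u‖) ^ 2) := by
  have hset : {v : ℝ | ∃ y : E, ‖y‖ ≤ ε ∧ v = ‖c + inner 𝕜 y u‖ ^ 2} =
      (· ^ 2) '' ((fun z => ‖c + z‖) '' ((fun y => inner 𝕜 y u) '' closedBall 0 ε)) := by
    ext
    simp only [Set.image_image, Set.mem_image, mem_closedBall_zero_iff, Set.mem_ofPred_eq,
      eq_comm]
  rw [hset, image_inner_left_closedBall u hε]
  refine MonotoneOn.map_isLeast (pow_left_monotoneOn.mono ?_)
    (isLeast_norm_add_closedBall c (by positivity))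
  rintro _ ⟨z, -, rfl⟩
  exact norm_nonneg _

namespace Matrix

lemma dotProduct_mulVec_eq_sum {n R : Type*} [Fintype n] [NonUnitalSemiring R]
    (v w : n → R) (M : Matrix n n R) :
    v ⬝ᵥ M *ᵥ w = ∑ i, ∑ j, v i * M i j * w j := by
  simp only [dotProduct, mulVec, Finset.mul_sum, mul_assoc]

variable {n 𝕜 : Type*} [Fintype n] [RCLike 𝕜] {Q : Matrix n n 𝕜}

/- `n → 𝕜` already carries the sup norm, so the structures induced by `Q` are passed explicitly. -/

lemma PosSemidef.inner_eq_dotProduct (hQ : Q.PosSemidef) (x y : n → 𝕜) :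
    @inner 𝕜 _ (Q.toInnerProductSpace hQ).toInner x y = star x ⬝ᵥ Q *ᵥ y :=
  dotProduct_comm _ _

lemma PosSemidef.norm_eq_sqrt_dotProduct (hQ : Q.PosSemidef) (x : n → 𝕜) :
    @norm _ (Q.toSeminormedAddCommGroup hQ).toNorm x = √(RCLike.re (star x ⬝ᵥ Q *ᵥ x)) := by
  rw [@norm_eq_sqrt_re_inner 𝕜 _ _ (Q.toSeminormedAddCommGroup hQ) (Q.toInnerProductSpace hQ),
    hQ.inner_eq_dotProduct]

end Matrix

/-- Robust beamforming lemma (minimum part): for a row vector `h`, column vector `w`,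
radius `ε > 0` and Hermitian positive definite `Q`, the minimum of `|h·w + x·w|²`
over row vectors `x` with `√(x Q xᴴ) ≤ ε` equals `(max 0 (|h·w| − ε √(wᴴ Q⁻¹ w)))²`. -/
theorem stmt_0 (N : ℕ) (h w : Fin N → ℂ) (ε : ℝ) (hε : 0 < ε)
    (Q : Matrix (Fin N) (Fin N) ℂ) (hQ : Q.PosDef) :
    IsLeast {v : ℝ | ∃ x : Fin N → ℂ,
        Real.sqrt (∑ i, ∑ j, x i * Q i j * (starRingEnd ℂ) (x j)).re ≤ ε ∧
        v = ‖∑ i, (h i + x i) * w i‖ ^ 2}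
      ((max 0 (‖∑ i, h i * w i‖ -
          ε * Real.sqrt (∑ i, ∑ j, (starRingEnd ℂ) (w i) * Q⁻¹ i j * w j).re)) ^ 2) := by
  have hQu : Q *ᵥ (Q⁻¹ *ᵥ w) = w := by
    rw [mulVec_mulVec, mul_nonsing_inv _ hQ.det_pos.ne'.isUnit, one_mulVec]
  have key := @isLeast_sq_norm_add_inner ℂ _ _ (Q.toSeminormedAddCommGroup hQ.posSemidef)
    (Q.toInnerProductSpace hQ.posSemidef) (∑ i, h i * w i) (Q⁻¹ *ᵥ w) ε hε.le
  simp only [hQ.posSemidef.norm_eq_sqrt_dotProduct, hQ.posSemidef.inner_eq_dotProduct, hQu] at key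
  convert key using 3 with v
  · conv_rhs => rw [star_involutive.surjective.exists]
    simp only [star_star, dotProduct_mulVec_eq_sum]
    simp only [Pi.star_apply, RCLike.star_def, RCLike.re_to_complex, dotProduct, add_mul,
      Finset.sum_add_distrib]
  · rw [star_dotProduct, RCLike.star_def, RCLike.conj_re, dotProduct_mulVec_eq_sum]
    rfl
end

section
/- Let h ∈ ℂ^N be a row vector, w ∈ ℂ^N a column vector, ε > 0, and Q an N×N Hermitian positive definite matrix. Then the maximum of |h·w + x·w|² over all row vectors x with √(x Q xᴴ) ≤ ε equals (|h·w| + ε·√(wᴴ Q⁻¹ w))². -/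
/-!
By Cauchy–Schwarz for the inner product `⟪a, b⟫ = aᴴ Q b`, writing `w = Q (Q⁻¹ w)` gives
`|yᴴ w| ≤ √(yᴴ Q y) · √(wᴴ Q⁻¹ w)`, with equality along `y ∈ 𝕜 · Q⁻¹ w`. Hence the values `x·w`
over the constraint set fill exactly the closed disc of radius `ε √(wᴴ Q⁻¹ w)`, and over such a
disc `|h·w + z|` is maximised by the `z` pointing in the direction of `h·w`.
-/

open scoped ComplexOrder

namespace Matrix

variable {𝕜 n : Type*} [RCLike 𝕜] [Fintype n]

open RCLike

theorem star_dotProduct_mulVec_eq_sum_sum (M : Matrix n n 𝕜) (y : n → 𝕜) :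
    star y ⬝ᵥ M *ᵥ y = ∑ i, ∑ j, starRingEnd 𝕜 (y i) * M i j * y j := by
  simp only [dotProduct, mulVec, Pi.star_apply, RCLike.star_def, Finset.mul_sum, mul_assoc]

theorem PosSemidef.norm_dotProduct_mulVec_le {M : Matrix n n 𝕜} (hM : M.PosSemidef) (x y : n → 𝕜) :
    ‖star x ⬝ᵥ M *ᵥ y‖ ≤ √(re (star x ⬝ᵥ M *ᵥ x)) * √(re (star y ⬝ᵥ M *ᵥ y)) := by
  let := M.toSeminormedAddCommGroup hM
  let := M.toInnerProductSpace hM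
  simp only [dotProduct_comm (star _)]
  exact norm_inner_le_norm (𝕜 := 𝕜) x y

theorem PosSemidef.ofReal_re_dotProduct_mulVec {M : Matrix n n 𝕜} (hM : M.PosSemidef) (x : n → 𝕜) :
    (re (star x ⬝ᵥ M *ᵥ x) : 𝕜) = star x ⬝ᵥ M *ᵥ x := by
  obtain ⟨r, -, hr⟩ := RCLike.nonneg_iff_exists_ofReal.mp (hM.dotProduct_mulVec_nonneg x)
  rw [← hr, ofReal_re]

variable [DecidableEq n] {Q : Matrix n n 𝕜}

theorem PosDef.mulVec_inv_mulVec (hQ : Q.PosDef) (w : n → 𝕜) : Q *ᵥ (Q⁻¹ *ᵥ w) = w := by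
  rw [mulVec_mulVec, mul_nonsing_inv _ hQ.det_pos.ne'.isUnit, one_mulVec]

theorem PosDef.star_inv_mulVec_dotProduct (hQ : Q.PosDef) (w : n → 𝕜) :
    star (Q⁻¹ *ᵥ w) ⬝ᵥ w = star w ⬝ᵥ Q⁻¹ *ᵥ w := by
  rw [star_mulVec, hQ.inv.isHermitian.eq, dotProduct_mulVec]

theorem PosDef.norm_dotProduct_le (hQ : Q.PosDef) (y w : n → 𝕜) :
    ‖star y ⬝ᵥ w‖ ≤ √(re (star y ⬝ᵥ Q *ᵥ y)) * √(re (star w ⬝ᵥ Q⁻¹ *ᵥ w)) := by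
  simpa only [hQ.mulVec_inv_mulVec, hQ.star_inv_mulVec_dotProduct] using
    hQ.posSemidef.norm_dotProduct_mulVec_le y (Q⁻¹ *ᵥ w)

theorem PosDef.image_dotProduct_eq_closedBall (hQ : Q.PosDef) (w : n → 𝕜) {ε : ℝ} (hε : 0 ≤ ε) :
    (fun y => star y ⬝ᵥ w) '' {y | √(re (star y ⬝ᵥ Q *ᵥ y)) ≤ ε} =
      Metric.closedBall 0 (ε * √(re (star w ⬝ᵥ Q⁻¹ *ᵥ w))) := by
  refine subset_antisymm ?_ fun z hz => ?_
  · rintro _ ⟨y, hy, rfl⟩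
    exact mem_closedBall_zero_iff.mpr <| (hQ.norm_dotProduct_le y w).trans (by gcongr; exact hy)
  have htw : star (Q⁻¹ *ᵥ w) ⬝ᵥ w = re (star w ⬝ᵥ Q⁻¹ *ᵥ w) := by
    rw [hQ.star_inv_mulVec_dotProduct, hQ.inv.posSemidef.ofReal_re_dotProduct_mulVec]
  have ht_nonneg := hQ.inv.posSemidef.re_dotProduct_nonneg w
  generalize re (star w ⬝ᵥ Q⁻¹ *ᵥ w) = t at hz htw ht_nonneg
  rw [mem_closedBall_zero_iff] at hz
  rcases ht_nonneg.eq_or_lt with rfl | ht_pos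
  · rw [Real.sqrt_zero, mul_zero, norm_le_zero_iff] at hz
    exact ⟨0, by simpa using hε, by simp [hz]⟩
  have ht : (t : 𝕜) ≠ 0 := ofReal_ne_zero.mpr ht_pos.ne'
  have hc : star (star z / (t : 𝕜)) = z / t := by simp
  -- the extremal direction is `Q⁻¹ w`, rescaled to hit `z`
  refine ⟨(star z / t) • Q⁻¹ *ᵥ w, ?_, ?_⟩
  · have hform : star z / t * (z / t * t) = ((‖z‖ ^ 2 / t : ℝ) : 𝕜) := by
      rw [div_mul_cancel₀ _ ht, div_mul_eq_mul_div, RCLike.star_def, RCLike.conj_mul]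
      push_cast; rfl
    rw [Set.mem_ofPred_eq, star_smul, mulVec_smul, hQ.mulVec_inv_mulVec, dotProduct_smul,
      smul_dotProduct, htw, hc, smul_eq_mul, smul_eq_mul, hform, ofReal_re,
      Real.sqrt_le_left hε, div_le_iff₀ ht_pos, ← Real.sq_sqrt ht_nonneg, ← mul_pow]
    exact pow_le_pow_left₀ (norm_nonneg z) hz 2
  · simp only [star_smul, smul_dotProduct, htw, hc, smul_eq_mul, div_mul_cancel₀ _ ht]

end Matrix

theorem isGreatest_image_norm_add_sq_closedBall {E : Type*} [NormedAddCommGroup E]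
    [NormedSpace ℝ E] [Nontrivial E] (s : E) {R : ℝ} (hR : 0 ≤ R) :
    IsGreatest ((fun z => ‖s + z‖ ^ 2) '' Metric.closedBall 0 R) ((‖s‖ + R) ^ 2) := by
  refine ⟨?_, ?_⟩
  · obtain ⟨z, hzs, hz⟩ : ∃ z : E, SameRay ℝ s z ∧ ‖z‖ = R := by
      rcases eq_or_ne s 0 with rfl | hs
      · exact (exists_norm_eq E hR).imp fun z hz => ⟨SameRay.zero_left z, hz⟩
      · refine ⟨(R / ‖s‖) • s, SameRay.sameRay_nonneg_smul_right s (by positivity), ?_⟩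
        rw [norm_smul, Real.norm_of_nonneg (by positivity),
          div_mul_cancel₀ _ (norm_ne_zero_iff.mpr hs)]
    exact ⟨z, mem_closedBall_zero_iff.mpr hz.le, by simp only [hzs.norm_add, hz]⟩
  · rintro _ ⟨z, hz, rfl⟩
    have := (norm_add_le s z).trans (add_le_add_right (mem_closedBall_zero_iff.mp hz) _)
    exact pow_le_pow_left₀ (norm_nonneg _) this 2

open Matrix in
/-- Robust beamforming lemma (maximum part): for a row vector `h`, column vector `w`,
radius `ε > 0` and Hermitian positive definite `Q`, the maximum of `|h·w + x·w|²`
over row vectors `x` with `√(x Q xᴴ) ≤ ε` equals `(|h·w| + ε √(wᴴ Q⁻¹ w))²`. -/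
theorem stmt_1 (N : ℕ) (h w : Fin N → ℂ) (ε : ℝ) (hε : 0 < ε)
    (Q : Matrix (Fin N) (Fin N) ℂ) (hQ : Q.PosDef) :
    IsGreatest {v : ℝ | ∃ x : Fin N → ℂ,
        Real.sqrt (∑ i, ∑ j, x i * Q i j * (starRingEnd ℂ) (x j)).re ≤ ε ∧
        v = ‖∑ i, (h i + x i) * w i‖ ^ 2}
      ((‖∑ i, h i * w i‖ +
          ε * Real.sqrt (∑ i, ∑ j, (starRingEnd ℂ) (w i) * Q⁻¹ i j * w j).re) ^ 2) := by
  have hset : {v : ℝ | ∃ x : Fin N → ℂ,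
        Real.sqrt (∑ i, ∑ j, x i * Q i j * (starRingEnd ℂ) (x j)).re ≤ ε ∧
        v = ‖∑ i, (h i + x i) * w i‖ ^ 2} =
      (fun z => ‖∑ i, h i * w i + z‖ ^ 2) ''
        ((fun y => star y ⬝ᵥ w) '' {y | √(RCLike.re (star y ⬝ᵥ Q *ᵥ y)) ≤ ε}) := by
    have hform (x : Fin N → ℂ) : ∑ i, ∑ j, x i * Q i j * (starRingEnd ℂ) (x j) =
        star (star x) ⬝ᵥ Q *ᵥ star x := by
      simpa using (star_dotProduct_mulVec_eq_sum_sum Q (star x)).symm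
    have hlin (x : Fin N → ℂ) : ∑ i, (h i + x i) * w i = ∑ i, h i * w i + star (star x) ⬝ᵥ w := by
      simp only [star_star, dotProduct, add_mul, Finset.sum_add_distrib]
    ext v
    simp only [Set.mem_ofPred_eq, Set.mem_image, hform, hlin]
    constructor
    · rintro ⟨x, hx, rfl⟩
      exact ⟨_, ⟨star x, hx, rfl⟩, rfl⟩
    · rintro ⟨_, ⟨y, hy, rfl⟩, rfl⟩
      exact ⟨star y, by simpa using hy, by simp⟩
  rw [hset, hQ.image_dotProduct_eq_closedBall w hε.le, star_dotProduct_mulVec_eq_sum_sum]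
  exact isGreatest_image_norm_add_sq_closedBall _ (by positivity)
end

section
/- Let h ∈ ℂ^N be a row vector, w ∈ ℂ^N a column vector, and ε ≥ 0. Then the infimum of |h·w + x·w|² over all row vectors x with ‖x‖₂ ≤ ε equals (max(0, |h·w| − ε‖w‖₂))², and the supremum equals (|h·w| + ε‖w‖₂)². -/
/-!
Writing `c = h·w`, the perturbation `x·w = ⟪conj w, x⟫` ranges exactly over the closed disc of
radius `ε‖w‖` in `ℂ` (Cauchy–Schwarz, with equality along `conj w`). Hence `|h·w + x·w|` ranges over
the norms of the points of the closed disc of that radius about `c`, whose least and greatest values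
`max 0 (|c| - ε‖w‖)` and `|c| + ε‖w‖` are attained on the line through `c`; squaring is monotone on
nonnegative reals.
-/

open Metric

section InnerFunctional

variable {𝕜 E : Type*} [RCLike 𝕜] [NormedAddCommGroup E] [InnerProductSpace 𝕜 E]

theorem image_inner_closedBall_zero (v : E) {ε : ℝ} (hε : 0 ≤ ε) :
    (fun x => inner 𝕜 v x) '' closedBall 0 ε = closedBall 0 (ε * ‖v‖) := by
  ext t
  simp only [Set.mem_image, mem_closedBall_zero_iff]
  constructor
  · rintro ⟨x, hx, rfl⟩
    calc ‖inner 𝕜 v x‖ ≤ ‖v‖ * ‖x‖ := norm_inner_le_norm v x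
      _ ≤ ε * ‖v‖ := by rw [mul_comm]; gcongr
  · intro ht
    rcases eq_or_ne v 0 with rfl | hv
    · exact ⟨0, by simpa using hε, by simpa [eq_comm] using ht⟩
    have hv' : 0 < ‖v‖ := norm_pos_iff.2 hv
    refine ⟨(t / (‖v‖ : 𝕜) ^ 2) • v, ?_, ?_⟩
    · rw [norm_smul, norm_div, norm_pow, RCLike.norm_ofReal, abs_norm]
      calc ‖t‖ / ‖v‖ ^ 2 * ‖v‖ = ‖t‖ / ‖v‖ := by field_simp
        _ ≤ ε := by rwa [div_le_iff₀ hv']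
    · have : (‖v‖ : 𝕜) ≠ 0 := by exact_mod_cast hv'.ne'
      rw [inner_smul_right, inner_self_eq_norm_sq_to_K, div_mul_cancel₀ _ (pow_ne_zero 2 this)]

end InnerFunctional

section NormOnClosedBall

variable {E : Type*} [NormedAddCommGroup E] [NormedSpace ℝ E] [Nontrivial E]

theorem exists_norm_eq_one_smul_eq (c : E) : ∃ u : E, ‖u‖ = 1 ∧ ‖c‖ • u = c := by
  rcases eq_or_ne c 0 with rfl | hc
  · obtain ⟨u, hu⟩ := exists_norm_eq E zero_le_one
    exact ⟨u, hu, by simp⟩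
  · exact ⟨‖c‖⁻¹ • c, by simp [norm_smul, hc], by simp [smul_smul, hc]⟩

theorem isLeast_norm_image_closedBall (c : E) {r : ℝ} (hr : 0 ≤ r) :
    IsLeast (norm '' closedBall c r) (max 0 (‖c‖ - r)) := by
  refine ⟨?_, ?_⟩
  · obtain ⟨u, hu, hcu⟩ := exists_norm_eq_one_smul_eq c
    refine ⟨c - min r ‖c‖ • u, ?_, ?_⟩
    · simp [norm_smul, hu, abs_of_nonneg (le_min hr (norm_nonneg c))]
    · nth_rewrite 1 [← hcu]
      rw [← sub_smul, norm_smul, hu, mul_one, Real.norm_eq_abs]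
      rcases le_total r ‖c‖ with h | h
      · rw [min_eq_left h, max_eq_right (by linarith), abs_of_nonneg (by linarith)]
      · rw [min_eq_right h, max_eq_left (by linarith), sub_self, abs_zero]
  · rintro _ ⟨x, hx, rfl⟩
    rw [mem_closedBall, dist_eq_norm] at hx
    exact max_le (norm_nonneg x) (by linarith [norm_sub_norm_le c x, norm_sub_rev x c])

theorem isGreatest_norm_image_closedBall (c : E) {r : ℝ} (hr : 0 ≤ r) :
    IsGreatest (norm '' closedBall c r) (‖c‖ + r) := by
  refine ⟨?_, ?_⟩
  · obtain ⟨u, hu, hcu⟩ := exists_norm_eq_one_smul_eq c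
    refine ⟨c + r • u, ?_, ?_⟩
    · simp [norm_smul, hu, abs_of_nonneg hr]
    · nth_rewrite 1 [← hcu]
      rw [← add_smul, norm_smul, hu, mul_one, Real.norm_of_nonneg (by positivity)]
  · rintro _ ⟨x, hx, rfl⟩
    rw [mem_closedBall, dist_eq_norm] at hx
    linarith [norm_le_insert' x c]

end NormOnClosedBall

section EuclideanSpace

variable {𝕜 ι : Type*} [RCLike 𝕜] [Fintype ι]

theorem EuclideanSpace.sum_mul_eq_inner_star (x w : EuclideanSpace 𝕜 ι) :
    ∑ i, x i * w i = inner 𝕜 (WithLp.toLp 2 (star w.ofLp) : EuclideanSpace 𝕜 ι) x := by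
  simp [EuclideanSpace.inner_eq_star_dotProduct, dotProduct]

theorem EuclideanSpace.norm_toLp_star (w : EuclideanSpace 𝕜 ι) :
    ‖(WithLp.toLp 2 (star w.ofLp) : EuclideanSpace 𝕜 ι)‖ = ‖w‖ := by
  simp [EuclideanSpace.norm_eq]

end EuclideanSpace

/-- Special case `Q = I` of the robust beamforming lemma: with Euclidean-ball
uncertainty of radius `ε ≥ 0`, the infimum of `|h·w + x·w|²` is
`(max 0 (|h·w| − ε‖w‖))²` and the supremum is `(|h·w| + ε‖w‖)²`. -/
theorem stmt_2 (N : ℕ) (h : EuclideanSpace ℂ (Fin N)) (w : EuclideanSpace ℂ (Fin N))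
    (ε : ℝ) (hε : 0 ≤ ε) :
    sInf {v : ℝ | ∃ x : EuclideanSpace ℂ (Fin N), ‖x‖ ≤ ε ∧
        v = ‖∑ i, (h i + x i) * w i‖ ^ 2}
      = (max 0 (‖∑ i, h i * w i‖ - ε * ‖w‖)) ^ 2 ∧
    sSup {v : ℝ | ∃ x : EuclideanSpace ℂ (Fin N), ‖x‖ ≤ ε ∧
        v = ‖∑ i, (h i + x i) * w i‖ ^ 2}
      = (‖∑ i, h i * w i‖ + ε * ‖w‖) ^ 2 := by
  set c : ℂ := ∑ i, h i * w i
  set w' : EuclideanSpace ℂ (Fin N) := WithLp.toLp 2 (star w.ofLp)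
  have hS : {v : ℝ | ∃ x : EuclideanSpace ℂ (Fin N), ‖x‖ ≤ ε ∧
      v = ‖∑ i, (h i + x i) * w i‖ ^ 2} = (· ^ 2) '' (norm '' closedBall c (ε * ‖w‖)) := by
    have hsum : ∀ x : EuclideanSpace ℂ (Fin N), ∑ i, (h i + x i) * w i = c + inner ℂ w' x := by
      simp [c, w', add_mul, Finset.sum_add_distrib, EuclideanSpace.sum_mul_eq_inner_star]
    rw [← EuclideanSpace.norm_toLp_star w, ← vadd_closedBall_zero, ← image_inner_closedBall_zero _ hε,
      ← Set.image_vadd, Set.image_image, Set.image_image, Set.image_image]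
    ext v
    simp [hsum, eq_comm, w']
  have hr : 0 ≤ ε * ‖w‖ := by positivity
  have hsq : MonotoneOn (· ^ 2 : ℝ → ℝ) (norm '' closedBall c (ε * ‖w‖)) :=
    pow_left_monotoneOn.mono (Set.image_subset_iff.2 fun x _ => norm_nonneg x)
  rw [hS]
  exact ⟨(hsq.map_isLeast (isLeast_norm_image_closedBall c hr)).csInf_eq,
    (hsq.map_isGreatest (isGreatest_norm_image_closedBall c hr)).csSup_eq⟩
end

section
/- With the worst-case SINR tsinr_m(w) = (max(0,|h̃_{m,m}·w_m| − ε_{m,m}‖w_m‖))² / (Σ_{n≠m}(|h̃_{m,n}·w_n| + ε_{m,n}‖w_n‖)² + 1), scaling all precoders by a common factor 1/√c with 0 < c < 1 strictly increases tsinr_m for every m (provided the numerator is positive). -/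
open scoped BigOperators

/-- Worst-case SINR of user `m` for precoders `w`, channel estimates `h m n` and
uncertainty radii `ε m n`. -/
noncomputable def tsinr12 {M N : ℕ} (h : Fin M → Fin M → EuclideanSpace ℂ (Fin N))
    (ε : Fin M → Fin M → ℝ) (w : Fin M → EuclideanSpace ℂ (Fin N)) (m : Fin M) : ℝ :=
  (max 0 (‖∑ i, h m m i * w m i‖ - ε m m * ‖w m‖)) ^ 2 /
    ((∑ n ∈ Finset.univ.erase m,
        (‖∑ i, h m n i * w n i‖ + ε m n * ‖w n‖) ^ 2) + 1)

/-! Scaling every precoder by `s = 1/√c > 1` multiplies both the worst-case signal power and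
the worst-case interference power by `s²`, but not the noise power `1` in the denominator.
Hence `A / (B + 1)` becomes `s² A / (s² B + 1)`, which is strictly larger as soon as `A > 0`. -/

lemma div_add_one_lt_mul_div_mul_add_one {A B t : ℝ} (hA : 0 < A) (hB : 0 ≤ B) (ht : 1 < t) :
    A / (B + 1) < t * A / (t * B + 1) := by
  rw [div_lt_div_iff₀ (by linarith) (by positivity)]
  nlinarith [mul_pos (sub_pos.mpr ht) hA]

lemma norm_sum_mul_smul {ι : Type*} [Fintype ι] {s : ℝ} (hs : 0 ≤ s)
    (x y : EuclideanSpace ℂ ι) :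
    ‖∑ i, x i * (s • y) i‖ = s * ‖∑ i, x i * y i‖ := by
  have hsum : ∑ i, x i * (s • y) i = (s : ℂ) * ∑ i, x i * y i := by
    simp only [PiLp.smul_apply, Complex.real_smul, Finset.mul_sum]
    exact Finset.sum_congr rfl fun i _ => mul_left_comm _ _ _
  rw [hsum, norm_mul, Complex.norm_real, Real.norm_of_nonneg hs]

lemma tsinr12_smul {M N : ℕ} (h : Fin M → Fin M → EuclideanSpace ℂ (Fin N))
    (ε : Fin M → Fin M → ℝ) (w : Fin M → EuclideanSpace ℂ (Fin N)) (m : Fin M)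
    {s : ℝ} (hs : 0 ≤ s) :
    tsinr12 h ε (fun n => s • w n) m =
      s ^ 2 * (max 0 (‖∑ i, h m m i * w m i‖ - ε m m * ‖w m‖)) ^ 2 /
        (s ^ 2 * (∑ n ∈ Finset.univ.erase m,
          (‖∑ i, h m n i * w n i‖ + ε m n * ‖w n‖) ^ 2) + 1) := by
  have hnorm (v : EuclideanSpace ℂ (Fin N)) : ‖s • v‖ = s * ‖v‖ := by
    rw [norm_smul, Real.norm_of_nonneg hs]
  have hsignal : max 0 (s * ‖∑ i, h m m i * w m i‖ - ε m m * (s * ‖w m‖)) =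
      s * max 0 (‖∑ i, h m m i * w m i‖ - ε m m * ‖w m‖) := by
    rw [mul_max_of_nonneg _ _ hs, mul_zero, mul_sub, mul_left_comm]
  simp only [tsinr12, norm_sum_mul_smul hs, hnorm, hsignal, Finset.mul_sum]
  congr 2
  · ring
  · exact Finset.sum_congr rfl fun n _ => by ring

theorem stmt_12_general (M N : ℕ)
    (h : Fin M → Fin M → EuclideanSpace ℂ (Fin N))
    (ε : Fin M → Fin M → ℝ)
    (w : Fin M → EuclideanSpace ℂ (Fin N))
    (c : ℝ) (hc0 : 0 < c) (hc1 : c < 1) (m : Fin M)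
    (hnum : 0 < ‖∑ i, h m m i * w m i‖ - ε m m * ‖w m‖) :
    tsinr12 h ε w m <
      tsinr12 h ε (fun n => ((Real.sqrt c)⁻¹ : ℝ) • w n) m := by
  have hscale : 1 < ((Real.sqrt c)⁻¹) ^ 2 := by
    rw [inv_pow, Real.sq_sqrt hc0.le]
    exact one_lt_inv₀ hc0 |>.mpr hc1
  rw [tsinr12_smul h ε w m (by positivity)]
  exact div_add_one_lt_mul_div_mul_add_one (pow_pos (lt_max_of_lt_right hnum) 2)
    (Finset.sum_nonneg fun n _ => sq_nonneg _) hscale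

/-- Scaling all precoders by `1/√c` with `0 < c < 1` strictly increases the
worst-case SINR of every user whose worst-case signal numerator is positive. -/
theorem stmt_12 (M N : ℕ)
    (h : Fin M → Fin M → EuclideanSpace ℂ (Fin N))
    (ε : Fin M → Fin M → ℝ) (hε : ∀ m n, 0 ≤ ε m n)
    (w : Fin M → EuclideanSpace ℂ (Fin N))
    (c : ℝ) (hc0 : 0 < c) (hc1 : c < 1) (m : Fin M)
    (hnum : 0 < ‖∑ i, h m m i * w m i‖ - ε m m * ‖w m‖) :
    tsinr12 h ε w m <
      tsinr12 h ε (fun n => ((Real.sqrt c)⁻¹ : ℝ) • w n) m :=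
  stmt_12_general M N h ε w c hc0 hc1 m hnum
end

section
/- Let h̃ ∈ ℂ^{1×N}, w ∈ ℂ^N a column vector, ε ≥ 0, and t > 0, a > 0 real. Suppose h̃·w is real and nonnegative. Then the condition (max(0, |(h̃)·w| − ε‖w‖))² ≥ a·t² (worst-case signal power at least a·t²) is equivalent to the second-order cone constraint ε‖w‖₂ ≤ h̃·w − √a·t. -/
theorem sq_le_max_zero_sq_iff {c x : ℝ} (hc : 0 < c) : c ^ 2 ≤ (max 0 x) ^ 2 ↔ c ≤ x := by
  rw [pow_le_pow_iff_left₀ hc.le (le_max_left 0 x) two_ne_zero, le_max_iff]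
  simp only [hc.not_ge, false_or]

theorem Complex.norm_eq_re_of_im_eq_zero {z : ℂ} (him : z.im = 0) (hre : 0 ≤ z.re) :
    ‖z‖ = z.re :=
  (Complex.abs_re_eq_norm.2 him).symm.trans (abs_of_nonneg hre)

theorem stmt_15_general (N : ℕ) (h w : EuclideanSpace ℂ (Fin N)) (ε t a : ℝ)
    (ht : 0 < t) (ha : 0 < a)
    (him : (∑ i, h i * w i).im = 0) (hre : 0 ≤ (∑ i, h i * w i).re) :
    a * t ^ 2 ≤ (max 0 (‖(∑ i, h i * w i)‖ - ε * ‖w‖)) ^ 2 ↔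
      ε * ‖w‖ ≤ (∑ i, h i * w i).re - Real.sqrt a * t := by
  have hsq : a * t ^ 2 = (Real.sqrt a * t) ^ 2 := by rw [mul_pow, Real.sq_sqrt ha.le]
  rw [hsq, Complex.norm_eq_re_of_im_eq_zero him hre,
    sq_le_max_zero_sq_iff (mul_pos (Real.sqrt_pos.2 ha) ht), le_sub_comm]

/-- SOC reformulation: if `h̃·w` is real and nonnegative, then
`(max 0 (|h̃·w| − ε‖w‖))² ≥ a t²` is equivalent to the second-order cone
constraint `ε‖w‖ ≤ h̃·w − √a · t`. -/
theorem stmt_15 (N : ℕ) (h w : EuclideanSpace ℂ (Fin N)) (ε t a : ℝ)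
    (hε : 0 ≤ ε) (ht : 0 < t) (ha : 0 < a)
    (him : (∑ i, h i * w i).im = 0) (hre : 0 ≤ (∑ i, h i * w i).re) :
    a * t ^ 2 ≤ (max 0 (‖(∑ i, h i * w i)‖ - ε * ‖w‖)) ^ 2 ↔
      ε * ‖w‖ ≤ (∑ i, h i * w i).re - Real.sqrt a * t :=
  stmt_15_general N h w ε t a ht ha him hre
end
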